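/- arXiv:1305.2771 — 7 statements merged into one kernel-verified Lean document; each statement's English description precedes it below -/
import Mathlib

section
/- Let X and Y be Banach spaces over ℂ, let A : Y → Y and B : X → X be bounded linear operators, let E : X → Y be a bounded linear operator, and let λ ∈ ℂ. Assume that A, B, λI + A and λI + B are all invertible (with bounded inverses). Then (λI + A)^{−1} ∘ E − E ∘ (λI + B)^{−1} = (I − λ(λI + A)^{−1}) ∘ (A^{−1} ∘ E − E ∘ B^{−1}) ∘ (I − λ(λI + B)^{−1}). -/
open ContinuousLinearMap

/-- Operator identity (3.4): if `A`, `B`, `λI + A`, `λI + B` are invertible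
bounded operators (with bounded inverses `A'`, `B'`, `RA`, `RB` respectively),
then `(λI+A)⁻¹ E - E (λI+B)⁻¹ = (I - λ(λI+A)⁻¹)(A⁻¹E - EB⁻¹)(I - λ(λI+B)⁻¹)`. -/
theorem resolvent_difference_identity
    {X Y : Type*} [NormedAddCommGroup X] [NormedSpace ℂ X]
    [NormedAddCommGroup Y] [NormedSpace ℂ Y]
    (A A' RA : Y →L[ℂ] Y) (B B' RB : X →L[ℂ] X) (E : X →L[ℂ] Y) (lam : ℂ)
    (hA1 : A.comp A' = ContinuousLinearMap.id ℂ Y)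
    (hA2 : A'.comp A = ContinuousLinearMap.id ℂ Y)
    (hB1 : B.comp B' = ContinuousLinearMap.id ℂ X)
    (hB2 : B'.comp B = ContinuousLinearMap.id ℂ X)
    (hRA1 : (lam • ContinuousLinearMap.id ℂ Y + A).comp RA = ContinuousLinearMap.id ℂ Y)
    (hRA2 : RA.comp (lam • ContinuousLinearMap.id ℂ Y + A) = ContinuousLinearMap.id ℂ Y)
    (hRB1 : (lam • ContinuousLinearMap.id ℂ X + B).comp RB = ContinuousLinearMap.id ℂ X)
    (hRB2 : RB.comp (lam • ContinuousLinearMap.id ℂ X + B) = ContinuousLinearMap.id ℂ X) :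
    RA.comp E - E.comp RB
      = ((ContinuousLinearMap.id ℂ Y - lam • RA).comp
          (A'.comp E - E.comp B')).comp
          (ContinuousLinearMap.id ℂ X - lam • RB) := by
  have h1 : ContinuousLinearMap.id ℂ Y - lam • RA = RA.comp A := by
    have := hRA2
    rw [comp_add, comp_smul, comp_id] at this
    linear_combination (norm := abel) -this
  have h2 : ContinuousLinearMap.id ℂ X - lam • RB = B.comp RB := by
    have := hRB1
    rw [add_comp, smul_comp, id_comp] at this
    linear_combination (norm := abel) -this
  rw [h1, h2]
  -- RHS = RA ∘ (E∘B − A∘E) ∘ RB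
  have hmid : ((RA.comp A).comp (A'.comp E - E.comp B')).comp (B.comp RB)
      = RA.comp ((E.comp B - A.comp E).comp RB) := by
    rw [comp_sub, sub_comp, sub_comp, comp_sub]
    congr 1
    · simp only [← comp_assoc]
      rw [comp_assoc RA A A', hA1, comp_id]
    · simp only [← comp_assoc]
      rw [comp_assoc _ B' B, hB2, comp_id]
  rw [hmid]
  -- LHS
  have hL : RA.comp E = RA.comp ((E.comp (lam • ContinuousLinearMap.id ℂ X + B)).comp RB) := by
    rw [comp_assoc, hRB1, comp_id]
  have hR : E.comp RB = RA.comp (((lam • ContinuousLinearMap.id ℂ Y + A).comp E).comp RB) := by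
    rw [← comp_assoc, ← comp_assoc, hRA2, id_comp]
  rw [hL, hR, ← comp_sub, ← sub_comp]
  congr 2
  simp [comp_add, add_comp, comp_smul, smul_comp]
end

section
/- Let X and Y be complex Hilbert spaces, let A : Y → Y and B : X → X be bounded self-adjoint operators that are invertible, let E : X → Y be a bounded linear operator, and let λ ∈ ℂ be such that −λ ∉ σ(A) and −λ ∉ σ(B). Then ‖(λI + A)^{−1} ∘ E − E ∘ (λI + B)^{−1}‖ ≤ (1 + |λ| / dist(−λ, σ(A))) (1 + |λ| / dist(−λ, σ(B))) ‖A^{−1} ∘ E − E ∘ B^{−1}‖. -/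
open ContinuousLinearMap
open scoped Ring

/-!
The identity `(λ + A)⁻¹ E - E (λ + B)⁻¹ = (λ + A)⁻¹ A (A⁻¹ E - E B⁻¹) B (λ + B)⁻¹` reduces the
estimate to bounding `(λ + A)⁻¹ A = 1 - λ (λ + A)⁻¹` and `B (λ + B)⁻¹ = 1 - λ (λ + B)⁻¹`. For a
normal operator the continuous functional calculus is isometric, so `‖(λ + A)⁻¹‖` is the supremum
of `|λ + x|⁻¹` over `x ∈ σ(A)`, which is at most `dist(-λ, σ(A))⁻¹`.
-/

section Algebra

variable {R A : Type*} [CommRing R] [Ring A] [Algebra R A] {a : A} {r : R}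

theorem isUnit_smul_one_add_iff : IsUnit (r • 1 + a) ↔ -r ∉ spectrum R a := by
  rw [spectrum.notMem_iff, Algebra.algebraMap_eq_smul_one, neg_smul, ← neg_add', IsUnit.neg_iff]

theorem inverse_smul_one_add_mul (h : IsUnit (r • 1 + a)) :
    (r • 1 + a)⁻¹ʳ * a = 1 - r • (r • 1 + a)⁻¹ʳ := by
  calc (r • 1 + a)⁻¹ʳ * a = (r • 1 + a)⁻¹ʳ * ((r • 1 + a) - r • 1) := by rw [add_sub_cancel_left]
    _ = 1 - r • (r • 1 + a)⁻¹ʳ := by rw [mul_sub, Ring.inverse_mul_cancel _ h, mul_smul_one]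

theorem mul_inverse_smul_one_add (h : IsUnit (r • 1 + a)) :
    a * (r • 1 + a)⁻¹ʳ = 1 - r • (r • 1 + a)⁻¹ʳ := by
  calc a * (r • 1 + a)⁻¹ʳ = ((r • 1 + a) - r • 1) * (r • 1 + a)⁻¹ʳ := by rw [add_sub_cancel_left]
    _ = 1 - r • (r • 1 + a)⁻¹ʳ := by rw [sub_mul, Ring.mul_inverse_cancel _ h, smul_one_mul]

end Algebra

section CStarAlgebra

variable {A : Type*} [CStarAlgebra A] (a : A) [IsStarNormal a] (lam : ℂ)

theorem norm_inverse_smul_one_add_le :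
    ‖(lam • 1 + a)⁻¹ʳ‖ ≤ (Metric.infDist (-lam) (spectrum ℂ a))⁻¹ := by
  by_cases hlam : -lam ∈ spectrum ℂ a
  · rw [Ring.inverse_non_unit _ (isUnit_smul_one_add_iff.not_left.mpr hlam), norm_zero]
    exact inv_nonneg.mpr Metric.infDist_nonneg
  have hne : ∀ x ∈ spectrum ℂ a, lam + x ≠ 0 := by
    rintro x hx hx0
    exact hlam (neg_eq_of_add_eq_zero_right hx0 ▸ hx)
  have hcfc : cfc (fun x ↦ (lam + x)⁻¹) a = (lam • 1 + a)⁻¹ʳ := by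
    rw [cfc_inv _ a hne, cfc_const_add lam (fun x ↦ x) a, cfc_id' ℂ a,
      Algebra.algebraMap_eq_smul_one]
  rw [← hcfc]
  refine norm_cfc_le (inv_nonneg.mpr Metric.infDist_nonneg) fun x hx ↦ ?_
  have hpos : 0 < Metric.infDist (-lam) (spectrum ℂ a) :=
    ((spectrum.isClosed a).notMem_iff_infDist_pos ⟨x, hx⟩).mp hlam
  rw [norm_inv]
  refine inv_anti₀ hpos ?_
  calc Metric.infDist (-lam) (spectrum ℂ a) ≤ dist (-lam) x := Metric.infDist_le_dist_of_mem hx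
    _ = ‖lam + x‖ := by rw [dist_comm, dist_eq_norm, sub_neg_eq_add, add_comm]

theorem norm_one_sub_smul_inverse_smul_one_add_le :
    ‖1 - lam • (lam • 1 + a)⁻¹ʳ‖ ≤ 1 + ‖lam‖ / Metric.infDist (-lam) (spectrum ℂ a) := by
  nontriviality A
  calc ‖1 - lam • (lam • 1 + a)⁻¹ʳ‖ ≤ ‖(1 : A)‖ + ‖lam‖ * ‖(lam • 1 + a)⁻¹ʳ‖ :=
        (norm_sub_le _ _).trans_eq (by rw [norm_smul])
    _ ≤ 1 + ‖lam‖ / Metric.infDist (-lam) (spectrum ℂ a) := by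
        rw [norm_one, div_eq_mul_inv]
        gcongr
        exact norm_inverse_smul_one_add_le a lam

end CStarAlgebra

section Identity

variable {𝕜 M N : Type*} [CommRing 𝕜]
  [AddCommGroup M] [Module 𝕜 M] [TopologicalSpace M] [IsTopologicalAddGroup M]
  [ContinuousConstSMul 𝕜 M]
  [AddCommGroup N] [Module 𝕜 N] [TopologicalSpace N] [IsTopologicalAddGroup N]
  [ContinuousConstSMul 𝕜 N]
  {a : N →L[𝕜] N} {b : M →L[𝕜] M} (e : M →L[𝕜] N) (lam : 𝕜)

theorem inverse_smul_one_add_comp_sub_comp_inverse (ha : IsUnit a) (hb : IsUnit b)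
    (hla : IsUnit (lam • 1 + a)) (hlb : IsUnit (lam • 1 + b)) :
    (lam • 1 + a)⁻¹ʳ.comp e - e.comp (lam • 1 + b)⁻¹ʳ
      = ((lam • 1 + a)⁻¹ʳ * a).comp
          ((a⁻¹ʳ.comp e - e.comp b⁻¹ʳ).comp (b * (lam • 1 + b)⁻¹ʳ)) := by
  have hcomm : e.comp (lam • 1 + b) - (lam • 1 + a).comp e = e.comp b - a.comp e := by
    simp only [comp_add, add_comp, comp_smul, smul_comp, one_def, comp_id, id_comp]
    abel
  have cancel_left {u : N →L[𝕜] N} (hu : IsUnit u) (x : M →L[𝕜] N) :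
      u⁻¹ʳ.comp (u.comp x) = x := by
    rw [← comp_assoc, ← mul_def, Ring.inverse_mul_cancel u hu, one_def, id_comp]
  have cancel_left' {u : N →L[𝕜] N} (hu : IsUnit u) (x : M →L[𝕜] N) :
      u.comp (u⁻¹ʳ.comp x) = x := by
    rw [← comp_assoc, ← mul_def, Ring.mul_inverse_cancel u hu, one_def, id_comp]
  have cancel_right {v : M →L[𝕜] M} (hv : IsUnit v) (x : M →L[𝕜] N) :
      x.comp (v.comp v⁻¹ʳ) = x := by
    rw [← mul_def, Ring.mul_inverse_cancel v hv, one_def, comp_id]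
  have cancel_right' {v : M →L[𝕜] M} (hv : IsUnit v) (x : M →L[𝕜] N) :
      x.comp (v⁻¹ʳ.comp v) = x := by
    rw [← mul_def, Ring.inverse_mul_cancel v hv, one_def, comp_id]
  calc (lam • 1 + a)⁻¹ʳ.comp e - e.comp (lam • 1 + b)⁻¹ʳ
      = (lam • 1 + a)⁻¹ʳ.comp ((e.comp (lam • 1 + b) - (lam • 1 + a).comp e).comp
          (lam • 1 + b)⁻¹ʳ) := by
        simp only [sub_comp, comp_sub, comp_assoc, cancel_left hla, cancel_right hlb]
    _ = (lam • 1 + a)⁻¹ʳ.comp ((a.comp ((a⁻¹ʳ.comp e - e.comp b⁻¹ʳ).comp b)).comp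
          (lam • 1 + b)⁻¹ʳ) := by
        rw [hcomm]
        simp only [sub_comp, comp_sub, comp_assoc, cancel_left' ha, cancel_right' hb]
    _ = _ := by simp only [mul_def, comp_assoc]

end Identity

/-- Lemma 3.4 (bounded self-adjoint version): if `A`, `B` are invertible bounded
self-adjoint operators, `E` bounded linear, and `-λ ∉ σ(A)`, `-λ ∉ σ(B)`, then
`‖(λI+A)⁻¹E - E(λI+B)⁻¹‖ ≤ (1 + |λ|/dist(-λ,σ(A)))(1 + |λ|/dist(-λ,σ(B))) ‖A⁻¹E - EB⁻¹‖`. -/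
theorem resolvent_difference_estimate
    {X Y : Type*} [NormedAddCommGroup X] [InnerProductSpace ℂ X] [CompleteSpace X]
    [NormedAddCommGroup Y] [InnerProductSpace ℂ Y] [CompleteSpace Y]
    (A : Y →L[ℂ] Y) (B : X →L[ℂ] X) (E : X →L[ℂ] Y)
    (hA : IsSelfAdjoint A) (hB : IsSelfAdjoint B)
    (hAu : IsUnit A) (hBu : IsUnit B) (lam : ℂ)
    (hlamA : -lam ∉ spectrum ℂ A) (hlamB : -lam ∉ spectrum ℂ B) :
    ‖(Ring.inverse (lam • ContinuousLinearMap.id ℂ Y + A)).comp E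
        - E.comp (Ring.inverse (lam • ContinuousLinearMap.id ℂ X + B))‖
      ≤ (1 + ‖lam‖ / Metric.infDist (-lam) (spectrum ℂ A))
          * (1 + ‖lam‖ / Metric.infDist (-lam) (spectrum ℂ B))
          * ‖(Ring.inverse A).comp E - E.comp (Ring.inverse B)‖ := by
  have := hA.isStarNormal
  have := hB.isStarNormal
  have hA' := isUnit_smul_one_add_iff.mpr hlamA
  have hB' := isUnit_smul_one_add_iff.mpr hlamB
  calc _ = ‖((lam • 1 + A)⁻¹ʳ * A).comp
        ((A⁻¹ʳ.comp E - E.comp B⁻¹ʳ).comp (B * (lam • 1 + B)⁻¹ʳ))‖ :=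
        congrArg norm (inverse_smul_one_add_comp_sub_comp_inverse E lam hAu hBu hA' hB')
    _ ≤ ‖(lam • 1 + A)⁻¹ʳ * A‖ * (‖A⁻¹ʳ.comp E - E.comp B⁻¹ʳ‖ * ‖B * (lam • 1 + B)⁻¹ʳ‖) :=
        (opNorm_comp_le _ _).trans (by gcongr; exact opNorm_comp_le _ _)
    _ = ‖1 - lam • (lam • 1 + A)⁻¹ʳ‖ * ‖1 - lam • (lam • 1 + B)⁻¹ʳ‖
          * ‖A⁻¹ʳ.comp E - E.comp B⁻¹ʳ‖ := by
        rw [inverse_smul_one_add_mul hA', mul_inverse_smul_one_add hB']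
        ring
    _ ≤ _ := by
        have hfacA := norm_one_sub_smul_inverse_smul_one_add_le A lam
        have hfacB := norm_one_sub_smul_inverse_smul_one_add_le B lam
        gcongr
        exact (norm_nonneg _).trans hfacA
end

section
/- Let 0 ≤ γ < 1, 0 ≤ α < 1, 0 < τ ≤ e^{−1} and t > 0. Then ∫_0^t (t−s)^{−γ} min(s^{−1} τ, s^{−α}) ds ≤ (2^{γ+2} / ((1−γ)(1−α))) · t^{−γ} (|log t| + |log τ|) τ. -/
/-!
Split `∫₀ᵗ` at `t / 2`. On `[0, t/2]` the kernel `(t - s)^{-γ}` is at most `(t/2)^{-γ}`, and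
`∫₀ᵗ l` is estimated by cutting at the crossover point `σ = τ^{1/(1-α)}` of the two branches of
`l`: below it `s^{-α}` contributes `σ^{1-α}/(1-α) = τ/(1-α)`, above it `τ/s` contributes
`τ (log t - log σ)`. On `[t/2, t]` we have `l ≤ 2τ/t`, and `∫_{t/2}^t (t-s)^{-γ} = (t/2)^{1-γ}/(1-γ)`.
Since `τ ≤ e⁻¹`, `|log τ| ≥ 1` absorbs the additive constants.
-/

open MeasureTheory intervalIntegral Set Real

section MinInvMulRpow

variable {α τ : ℝ}

theorem continuousOn_min_inv_mul_rpow :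
    ContinuousOn (fun s : ℝ => min (s⁻¹ * τ) (s ^ (-α))) (Ioi 0) := by
  fun_prop (disch := exact fun s hs => ne_of_gt hs)

theorem min_inv_mul_rpow_nonneg (hτ : 0 ≤ τ) {s : ℝ} (hs : 0 ≤ s) :
    0 ≤ min (s⁻¹ * τ) (s ^ (-α)) :=
  le_min (by positivity) (by positivity)

theorem intervalIntegrable_min_inv_mul_rpow (hα : α < 1) (hτ : 0 ≤ τ) {a b : ℝ}
    (ha : 0 ≤ a) (hb : 0 ≤ b) :
    IntervalIntegrable (fun s : ℝ => min (s⁻¹ * τ) (s ^ (-α))) volume a b := by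
  refine (intervalIntegrable_rpow' (r := -α) (by linarith)).mono_fun'
    (by fun_prop : Measurable _).aestronglyMeasurable ?_
  filter_upwards [ae_restrict_mem measurableSet_uIoc] with s hs
  have hs0 : 0 < s := (le_min ha hb).trans_lt hs.1
  rw [Real.norm_of_nonneg (min_inv_mul_rpow_nonneg hτ hs0.le)]
  exact min_le_right _ _

theorem integral_min_inv_mul_rpow_mono (hα : α < 1) (hτ : 0 ≤ τ) {a b : ℝ}
    (hb : 0 ≤ b) (hba : b ≤ a) :
    ∫ s in (0 : ℝ)..b, min (s⁻¹ * τ) (s ^ (-α)) ≤ ∫ s in (0 : ℝ)..a, min (s⁻¹ * τ) (s ^ (-α)) :=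
  integral_mono_interval le_rfl hb hba
    ((ae_restrict_mem measurableSet_Ioc).mono fun _ hs => min_inv_mul_rpow_nonneg hτ hs.1.le)
    (intervalIntegrable_min_inv_mul_rpow hα hτ le_rfl (hb.trans hba))

theorem integral_rpow_neg_of_lt_one (hα : α < 1) (a : ℝ) :
    ∫ s in (0 : ℝ)..a, s ^ (-α) = a ^ (1 - α) / (1 - α) := by
  rw [integral_rpow (Or.inl (by linarith)), zero_rpow (by linarith), sub_zero, neg_add_eq_sub]

theorem integral_min_inv_mul_rpow_le (hα0 : 0 ≤ α) (hα1 : α < 1) (hτ : 0 < τ) {a : ℝ}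
    (ha : 0 < a) :
    ∫ s in (0 : ℝ)..a, min (s⁻¹ * τ) (s ^ (-α))
      ≤ τ * (1 + |log a| + |log τ|) / (1 - α) := by
  have hα : 0 < 1 - α := by linarith
  set σ := τ ^ (1 - α)⁻¹
  have hσ : 0 < σ := rpow_pos_of_pos hτ _
  have hσ_pow : σ ^ (1 - α) = τ := rpow_inv_rpow hτ.le hα.ne'
  have head : ∀ b, 0 ≤ b → b ≤ σ →
      ∫ s in (0 : ℝ)..b, min (s⁻¹ * τ) (s ^ (-α)) ≤ τ / (1 - α) := fun b hb hbσ =>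
    calc ∫ s in (0 : ℝ)..b, min (s⁻¹ * τ) (s ^ (-α)) ≤ ∫ s in (0 : ℝ)..b, s ^ (-α) :=
          integral_mono_on hb (intervalIntegrable_min_inv_mul_rpow hα1 hτ.le le_rfl hb)
            (intervalIntegrable_rpow' (by linarith)) fun s _ => min_le_right _ _
      _ = b ^ (1 - α) / (1 - α) := integral_rpow_neg_of_lt_one hα1 b
      _ ≤ σ ^ (1 - α) / (1 - α) := by gcongr
      _ = τ / (1 - α) := by rw [hσ_pow]
  rcases le_or_gt a σ with haσ | hσa
  · calc _ ≤ τ / (1 - α) := head a ha.le haσ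
      _ ≤ τ * (1 + |log a| + |log τ|) / (1 - α) := by
          gcongr; nlinarith [abs_nonneg (log a), abs_nonneg (log τ)]
  have tail : ∫ s in σ..a, min (s⁻¹ * τ) (s ^ (-α)) ≤ τ * (log a - log σ) :=
    calc ∫ s in σ..a, min (s⁻¹ * τ) (s ^ (-α)) ≤ ∫ s in σ..a, τ * s⁻¹ :=
          integral_mono_on hσa.le (intervalIntegrable_min_inv_mul_rpow hα1 hτ.le hσ.le ha.le)
            ((intervalIntegrable_inv_iff.2 (Or.inr (notMem_uIcc_of_lt hσ ha))).const_mul τ)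
            fun s _ => (min_le_left _ _).trans_eq (mul_comm _ _)
      _ = τ * (log a - log σ) := by
          rw [intervalIntegral.integral_const_mul, integral_inv_of_pos hσ ha,
            log_div ha.ne' hσ.ne']
  have hlog_σ : log σ = log τ / (1 - α) := by rw [log_rpow hτ, inv_mul_eq_div]
  have hlog_a : (1 - α) * log a ≤ |log a| := by
    nlinarith [mul_nonneg hα0 (abs_nonneg (log a)),
      mul_nonneg hα.le (sub_nonneg.2 (le_abs_self (log a)))]
  calc ∫ s in (0 : ℝ)..a, min (s⁻¹ * τ) (s ^ (-α))
      = (∫ s in (0 : ℝ)..σ, min (s⁻¹ * τ) (s ^ (-α)))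
          + ∫ s in σ..a, min (s⁻¹ * τ) (s ^ (-α)) :=
        (integral_add_adjacent_intervals
          (intervalIntegrable_min_inv_mul_rpow hα1 hτ.le le_rfl hσ.le)
          (intervalIntegrable_min_inv_mul_rpow hα1 hτ.le hσ.le ha.le)).symm
    _ ≤ τ / (1 - α) + τ * (log a - log τ / (1 - α)) := by
        rw [← hlog_σ]; exact add_le_add (head σ hσ.le le_rfl) tail
    _ = τ * (1 + (1 - α) * log a - log τ) / (1 - α) := by field_simp; ring
    _ ≤ τ * (1 + |log a| + |log τ|) / (1 - α) := by
        gcongr; linarith [neg_le_abs (log τ)]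

end MinInvMulRpow

section SubRpowMul

variable {γ t : ℝ}

theorem div_two_rpow_neg (ht : 0 ≤ t) : (t / 2) ^ (-γ) = 2 ^ γ * t ^ (-γ) := by
  rw [div_rpow ht zero_le_two, rpow_neg zero_le_two, div_eq_mul_inv, inv_inv, mul_comm]

theorem intervalIntegrable_sub_rpow (hγ : γ < 1) (t a b : ℝ) :
    IntervalIntegrable (fun s : ℝ => (t - s) ^ (-γ)) volume a b := by
  simpa using (intervalIntegrable_rpow' (r := -γ) (a := t - a) (b := t - b)
    (by linarith)).comp_sub_left t

theorem integral_sub_rpow_of_half_le (hγ : γ < 1) (t : ℝ) :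
    ∫ s in t / 2..t, (t - s) ^ (-γ) = (t / 2) ^ (1 - γ) / (1 - γ) := by
  rw [integral_comp_sub_left (fun s => s ^ (-γ)), sub_self, sub_half,
    integral_rpow_neg_of_lt_one hγ]

theorem intervalIntegrable_sub_rpow_mul_of_le_half (ht : 0 < t) {f : ℝ → ℝ}
    (hf : IntervalIntegrable f volume 0 (t / 2)) :
    IntervalIntegrable (fun s => (t - s) ^ (-γ) * f s) volume 0 (t / 2) := by
  refine hf.continuousOn_mul (ContinuousOn.rpow_const (by fun_prop) fun s hs => Or.inl ?_)
  rw [uIcc_of_le (by positivity)] at hs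
  linarith [hs.2]

theorem integral_sub_rpow_mul_le_of_le_half (hγ : 0 ≤ γ) (ht : 0 < t) {f : ℝ → ℝ}
    (hf : IntervalIntegrable f volume 0 (t / 2)) (hf0 : ∀ s ∈ Ioo 0 (t / 2), 0 ≤ f s) :
    ∫ s in (0 : ℝ)..t / 2, (t - s) ^ (-γ) * f s
      ≤ (t / 2) ^ (-γ) * ∫ s in (0 : ℝ)..t / 2, f s := by
  rw [← intervalIntegral.integral_const_mul]
  refine integral_mono_on_of_le_Ioo (by positivity)
    (intervalIntegrable_sub_rpow_mul_of_le_half ht hf) (hf.const_mul _) fun s hs => ?_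
  exact mul_le_mul_of_nonneg_right
    (rpow_le_rpow_of_nonpos (by positivity) (by linarith [hs.2]) (by linarith)) (hf0 s hs)

theorem integral_sub_rpow_mul_le_of_half_le (hγ : γ < 1) (ht : 0 < t) {f : ℝ → ℝ} {M : ℝ}
    (hf : ContinuousOn f (uIcc (t / 2) t)) (hM : ∀ s ∈ Ioo (t / 2) t, f s ≤ M) :
    ∫ s in t / 2..t, (t - s) ^ (-γ) * f s ≤ M * ((t / 2) ^ (1 - γ) / (1 - γ)) := by
  rw [← integral_sub_rpow_of_half_le hγ, ← intervalIntegral.integral_const_mul]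
  refine integral_mono_on_of_le_Ioo (by linarith)
    ((intervalIntegrable_sub_rpow hγ t _ _).mul_continuousOn hf)
    ((intervalIntegrable_sub_rpow hγ t _ _).const_mul M) fun s hs => ?_
  rw [mul_comm M]
  exact mul_le_mul_of_nonneg_left (hM s hs) (rpow_nonneg (by linarith [hs.2]) _)

end SubRpowMul

theorem add_div_one_sub_le {α γ L : ℝ} (hα0 : 0 ≤ α) (hα1 : α < 1) (hγ0 : 0 ≤ γ)
    (hγ1 : γ < 1) (hL : 1 ≤ L) : (1 + L) / (1 - α) + 1 / (1 - γ) ≤ 4 * L / ((1 - γ) * (1 - α)) := by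
  have hα : 0 < 1 - α := by linarith
  have hγ : 0 < 1 - γ := by linarith
  rw [div_add_div _ _ hα.ne' hγ.ne', div_le_div_iff₀ (by positivity) (by positivity)]
  nlinarith [mul_pos hα hγ, mul_le_mul_of_nonneg_right hL (mul_pos hα hγ).le]

/-- Lemma 3.10, first estimate (with precise constant `2^{γ+2}/((1-γ)(1-α))`):
for `0 ≤ γ < 1`, `0 ≤ α < 1`, `0 < τ ≤ e⁻¹`, `t > 0`,
`∫₀ᵗ (t-s)^{-γ} min(s⁻¹τ, s^{-α}) ds ≤ (2^{γ+2}/((1-γ)(1-α))) t^{-γ} (|log t| + |log τ|) τ`. -/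
theorem convolution_l_estimate
    (γ α τ t : ℝ) (hγ0 : 0 ≤ γ) (hγ1 : γ < 1) (hα0 : 0 ≤ α) (hα1 : α < 1)
    (hτ0 : 0 < τ) (hτ1 : τ ≤ Real.exp (-1)) (ht : 0 < t) :
    ∫ s in (0:ℝ)..t, (t - s) ^ (-γ) * min (s⁻¹ * τ) (s ^ (-α))
      ≤ (2 : ℝ) ^ (γ + 2) / ((1 - γ) * (1 - α)) * t ^ (-γ)
          * (|Real.log t| + |Real.log τ|) * τ := by
  have ht2 : 0 < t / 2 := half_pos ht
  have hL : 1 ≤ |log t| + |log τ| := by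
    have : log τ ≤ -1 := by simpa using log_le_log hτ0 hτ1
    linarith [abs_nonneg (log t), neg_le_abs (log τ)]
  have hl_int := intervalIntegrable_min_inv_mul_rpow hα1 hτ0.le le_rfl ht2.le
  have hl_cont : ContinuousOn (fun s => min (s⁻¹ * τ) (s ^ (-α))) (uIcc (t / 2) t) :=
    continuousOn_min_inv_mul_rpow.mono fun s hs => (lt_min ht2 ht).trans_le hs.1
  have hhead : ∫ s in (0 : ℝ)..t / 2, (t - s) ^ (-γ) * min (s⁻¹ * τ) (s ^ (-α))
      ≤ (t / 2) ^ (-γ) * (τ * (1 + |log t| + |log τ|) / (1 - α)) :=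
    (integral_sub_rpow_mul_le_of_le_half hγ0 ht hl_int
      fun s hs => min_inv_mul_rpow_nonneg hτ0.le hs.1.le).trans <| by
        gcongr
        exact (integral_min_inv_mul_rpow_mono hα1 hτ0.le ht2.le (by linarith)).trans
          (integral_min_inv_mul_rpow_le hα0 hα1 hτ0 ht)
  have htail := integral_sub_rpow_mul_le_of_half_le hγ1 ht (M := (t / 2)⁻¹ * τ) hl_cont
    fun s hs => (min_le_left _ _).trans (by gcongr; exact hs.1.le)
  have hpow_succ : (t / 2) ^ (1 - γ) = (t / 2) ^ (-γ) * (t / 2) := by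
    rw [← rpow_add_one ht2.ne', neg_add_eq_sub]
  rw [← integral_add_adjacent_intervals (intervalIntegrable_sub_rpow_mul_of_le_half ht hl_int)
    ((intervalIntegrable_sub_rpow hγ1 t _ _).mul_continuousOn hl_cont)]
  calc _ ≤ (t / 2) ^ (-γ) * (τ * (1 + |log t| + |log τ|) / (1 - α))
        + (t / 2)⁻¹ * τ * ((t / 2) ^ (1 - γ) / (1 - γ)) := add_le_add hhead htail
    _ = 2 ^ γ * t ^ (-γ) * τ * ((1 + (|log t| + |log τ|)) / (1 - α) + 1 / (1 - γ)) := by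
        rw [hpow_succ, div_two_rpow_neg ht.le]; field_simp; ring
    _ ≤ 2 ^ γ * t ^ (-γ) * τ * (4 * (|log t| + |log τ|) / ((1 - γ) * (1 - α))) := by
        gcongr; exact add_div_one_sub_le hα0 hα1 hγ0 hγ1 hL
    _ = _ := by rw [rpow_add two_pos]; norm_num; ring
end

section
/- Let 0 ≤ α < 1, 0 < τ ≤ e^{−1}, a ≥ 0 and t > 0. Then ∫_0^t e^{−as} min(s^{−1} τ, s^{−α}) ds ≤ (2/(1−α)) (|log t| + |log τ|) τ. -/
open MeasureTheory intervalIntegral Real Set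

/-- Lemma 3.10, second estimate: for `0 ≤ α < 1`, `0 < τ ≤ e⁻¹`, `a ≥ 0`, `t > 0`,
`∫₀ᵗ e^{-as} min(s⁻¹τ, s^{-α}) ds ≤ (2/(1-α)) (|log t| + |log τ|) τ`. -/
theorem exp_l_integral_estimate
    (α τ a t : ℝ) (hα0 : 0 ≤ α) (hα1 : α < 1)
    (hτ0 : 0 < τ) (hτ1 : τ ≤ Real.exp (-1)) (ha : 0 ≤ a) (ht : 0 < t) :
    ∫ s in (0:ℝ)..t, Real.exp (-a * s) * min (s⁻¹ * τ) (s ^ (-α))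
      ≤ 2 / (1 - α) * (|Real.log t| + |Real.log τ|) * τ := by
  set c : ℝ := 1 - α with hc
  have hc0 : 0 < c := by simp only [hc]; linarith
  have hc1 : c ≤ 1 := by simp only [hc]; linarith
  set b : ℝ := τ ^ (c⁻¹ : ℝ) with hb
  have hb0 : 0 < b := Real.rpow_pos_of_pos hτ0 _
  have hbc : b ^ (c : ℝ) = τ := Real.rpow_inv_rpow hτ0.le hc0.ne'
  have hlogτ : Real.log τ ≤ -1 := by
    have := Real.log_le_log hτ0 hτ1
    rwa [Real.log_exp] at this
  have hL : 1 ≤ |Real.log τ| := by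
    rw [abs_of_nonpos (by linarith)]; linarith
  set m : ℝ → ℝ := fun s => min (s⁻¹ * τ) (s ^ (-α)) with hm
  have hm_cont : ContinuousOn m (Set.Ioi (0:ℝ)) := by
    apply ContinuousOn.inf
    · exact (continuousOn_inv₀.mono (fun x hx => ne_of_gt hx)).mul continuousOn_const
    · intro x hx
      exact (Real.continuousAt_rpow_const x (-α) (Or.inl (ne_of_gt hx))).continuousWithinAt
  have hm_aesm : ∀ u v : ℝ, 0 ≤ u → u ≤ v →
      AEStronglyMeasurable m (volume.restrict (Set.uIoc u v)) := by
    intro u v hu huv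
    rw [Set.uIoc_of_le huv]
    apply (hm_cont.mono _).aestronglyMeasurable measurableSet_Ioc
    intro x hx
    exact lt_of_le_of_lt hu hx.1
  have hr_int : ∀ u v : ℝ, IntervalIntegrable (fun s : ℝ => s ^ (-α)) volume u v :=
    fun u v => intervalIntegral.intervalIntegrable_rpow' (by linarith)
  have hm_nonneg : ∀ s : ℝ, 0 < s → 0 ≤ m s := by
    intro s hs
    exact le_min (by positivity) (Real.rpow_nonneg hs.le _)
  have hm_le : ∀ s : ℝ, 0 < s → m s ≤ s ^ (-α) := fun s _ => min_le_right _ _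
  have hm_int : ∀ u v : ℝ, 0 ≤ u → u ≤ v → IntervalIntegrable m volume u v := by
    intro u v hu huv
    apply (hr_int u v).mono_fun (hm_aesm u v hu huv)
    filter_upwards [ae_restrict_mem measurableSet_uIoc] with s hs
    rw [Set.uIoc_of_le huv] at hs
    have hs0 : 0 < s := lt_of_le_of_lt hu hs.1
    rw [Real.norm_eq_abs, Real.norm_eq_abs, abs_of_nonneg (hm_nonneg s hs0),
      abs_of_nonneg (Real.rpow_nonneg hs0.le _)]
    exact hm_le s hs0
  have hf_int : IntervalIntegrable (fun s => Real.exp (-a * s) * m s) volume 0 t := by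
    apply (hm_int 0 t le_rfl ht.le).mono_fun
    · exact (((Real.continuous_exp.comp (continuous_const.mul continuous_id)).continuousOn).mul
        (hm_cont.mono (by rw [Set.uIoc_of_le ht.le]; exact fun x hx => hx.1))).aestronglyMeasurable
        measurableSet_uIoc
    · filter_upwards [ae_restrict_mem measurableSet_uIoc] with s hs
      rw [Set.uIoc_of_le ht.le] at hs
      have h1 : Real.exp (-a * s) ≤ 1 := by
        rw [Real.exp_le_one_iff]; nlinarith [hs.1]
      have h0 := hm_nonneg s hs.1
      rw [Real.norm_eq_abs, Real.norm_eq_abs, abs_of_nonneg (by positivity), abs_of_nonneg h0]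
      nlinarith
  -- step 1: drop the exponential
  have step1 : ∫ s in (0:ℝ)..t, Real.exp (-a * s) * m s ≤ ∫ s in (0:ℝ)..t, m s := by
    apply intervalIntegral.integral_mono_on ht.le hf_int (hm_int 0 t le_rfl ht.le)
    intro s hs
    rcases eq_or_lt_of_le hs.1 with h | h
    · subst h; simp [hm]
    · have h1 : Real.exp (-a * s) ≤ 1 := by
        rw [Real.exp_le_one_iff]; nlinarith
      have h0 := hm_nonneg s h
      nlinarith
  -- value of rpow integral
  have hrpow_val : ∀ u : ℝ, 0 ≤ u → ∫ s in (0:ℝ)..u, s ^ (-α) = u ^ c / c := by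
    intro u hu
    rw [integral_rpow (Or.inl (by linarith))]
    have h1 : (-α + 1 : ℝ) = c := by rw [hc]; ring
    rw [Real.zero_rpow (by rw [h1]; exact hc0.ne'), h1]
    ring
  -- main case split
  rcases le_or_gt t b with htb | hbt
  · -- t ≤ b : just bound by s ^ (-α)
    have h2 : ∫ s in (0:ℝ)..t, m s ≤ ∫ s in (0:ℝ)..t, s ^ (-α) := by
      apply intervalIntegral.integral_mono_on ht.le (hm_int 0 t le_rfl ht.le) (hr_int 0 t)
      intro s hs
      rcases eq_or_lt_of_le hs.1 with h | h
      · subst h; simp [hm]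
      · exact hm_le s h
    have h3 : t ^ c ≤ τ := by
      rw [← hbc]
      exact Real.rpow_le_rpow ht.le htb hc0.le
    have h4 : ∫ s in (0:ℝ)..t, s ^ (-α) ≤ τ / c := by
      rw [hrpow_val t ht.le]
      gcongr
    have h5 : τ / c ≤ 2 / (1 - α) * (|Real.log t| + |Real.log τ|) * τ := by
      rw [← hc]
      rw [div_eq_mul_inv, div_eq_mul_inv]
      have habs : 0 ≤ |Real.log t| := abs_nonneg _
      have hcinv : 0 < c⁻¹ := inv_pos.mpr hc0
      nlinarith [mul_pos hτ0 hcinv, mul_nonneg (mul_nonneg habs hcinv.le) hτ0.le,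
        mul_nonneg (mul_nonneg (sub_nonneg.mpr hL) hcinv.le) hτ0.le]
    calc ∫ s in (0:ℝ)..t, Real.exp (-a * s) * m s ≤ ∫ s in (0:ℝ)..t, m s := step1
      _ ≤ ∫ s in (0:ℝ)..t, s ^ (-α) := h2
      _ ≤ τ / c := h4
      _ ≤ _ := h5
  · -- b < t : split at b
    have hsplit : ∫ s in (0:ℝ)..t, m s = (∫ s in (0:ℝ)..b, m s) + ∫ s in b..t, m s := by
      rw [intervalIntegral.integral_add_adjacent_intervals (hm_int 0 b le_rfl hb0.le)
        (hm_int b t hb0.le hbt.le)]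
    have hpart1 : ∫ s in (0:ℝ)..b, m s ≤ τ / c := by
      have h2 : ∫ s in (0:ℝ)..b, m s ≤ ∫ s in (0:ℝ)..b, s ^ (-α) := by
        apply intervalIntegral.integral_mono_on hb0.le (hm_int 0 b le_rfl hb0.le) (hr_int 0 b)
        intro s hs
        rcases eq_or_lt_of_le hs.1 with h | h
        · subst h; simp [hm]
        · exact hm_le s h
      rw [hrpow_val b hb0.le, hbc] at h2
      exact h2
    have hinv_int : IntervalIntegrable (fun s : ℝ => s⁻¹ * τ) volume b t := by
      apply ContinuousOn.intervalIntegrable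
      apply ContinuousOn.mul _ continuousOn_const
      apply continuousOn_inv₀.mono
      intro x hx
      rw [Set.uIcc_of_le hbt.le] at hx
      exact ne_of_gt (lt_of_lt_of_le hb0 hx.1)
    have hpart2 : ∫ s in b..t, m s ≤ (Real.log t - Real.log b) * τ := by
      have h2 : ∫ s in b..t, m s ≤ ∫ s in b..t, s⁻¹ * τ := by
        apply intervalIntegral.integral_mono_on hbt.le (hm_int b t hb0.le hbt.le) hinv_int
        intro s hs
        exact min_le_left _ _
      have h3 : ∫ s in b..t, (s⁻¹ * τ) = (Real.log t - Real.log b) * τ := by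
        rw [intervalIntegral.integral_mul_const, integral_inv]
        · rw [Real.log_div (ne_of_gt (lt_of_lt_of_le hb0 hbt.le)) hb0.ne']
        · rw [Set.uIcc_of_le hbt.le]
          intro h
          exact absurd h.1 (not_le.mpr hb0)
      rw [h3] at h2
      exact h2
    have hlogb : Real.log b = c⁻¹ * Real.log τ := by
      rw [hb, Real.log_rpow hτ0]
    have hfinal : τ / c + (Real.log t - Real.log b) * τ
        ≤ 2 / (1 - α) * (|Real.log t| + |Real.log τ|) * τ := by
      rw [← hc, hlogb]
      have habs_t : Real.log t ≤ |Real.log t| := le_abs_self _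
      have habs_t0 : 0 ≤ |Real.log t| := abs_nonneg _
      have habsτ : |Real.log τ| = -Real.log τ := abs_of_nonpos (by linarith)
      have hcinv1 : 1 ≤ c⁻¹ := (one_le_inv_iff₀.mpr ⟨hc0, hc1⟩ : _)
      rw [habsτ]
      rw [div_eq_mul_inv, div_eq_mul_inv]
      nlinarith [mul_pos hτ0 (inv_pos.mpr hc0), mul_nonneg habs_t0 hτ0.le,
        mul_nonneg (mul_nonneg habs_t0 (le_trans zero_le_one hcinv1)) hτ0.le,
        mul_le_mul_of_nonneg_right (neg_le_neg hlogτ) (mul_nonneg (le_trans zero_le_one hcinv1 : (0:ℝ) ≤ c⁻¹) hτ0.le)]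
    calc ∫ s in (0:ℝ)..t, Real.exp (-a * s) * m s ≤ ∫ s in (0:ℝ)..t, m s := step1
      _ = (∫ s in (0:ℝ)..b, m s) + ∫ s in b..t, m s := hsplit
      _ ≤ τ / c + (Real.log t - Real.log b) * τ := add_le_add hpart1 hpart2
      _ ≤ _ := hfinal
end

section
/- Let 0 ≤ α < 1, 0 < τ ≤ e^{−2} and a ≥ 1. Then ∫_0^∞ e^{−as} min(s^{−1} τ, s^{−α}) ds ≤ (2/(1−α)) |log τ| τ. -/
/-!
Split `(0, ∞)` at `σ = τ^{1/(1-α)}` and at `1`. On `(0, σ]` bound the integrand by `s^{-α}`,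
whose integral is `σ^{1-α}/(1-α) = τ/(1-α)`; on `(σ, 1]` by `τ/s`, giving
`τ log(1/σ) = τ |log τ|/(1-α)`; on `(1, ∞)` by `τ e^{-s}`, giving `τ/e ≤ τ/(1-α)`.
The total `(2 + |log τ|) τ/(1-α)` is at most `2 |log τ| τ/(1-α)` because `|log τ| ≥ 2`.
-/

open MeasureTheory Set Real

theorem integrableOn_and_setIntegral_le_of_nonneg_of_le {X : Type*} [MeasurableSpace X]
    {μ : Measure X} {f g : X → ℝ} {S : Set X} (hg : IntegrableOn g S μ)
    (hf : AEStronglyMeasurable f (μ.restrict S)) (hS : MeasurableSet S)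
    (hf₀ : ∀ x ∈ S, 0 ≤ f x) (hfg : ∀ x ∈ S, f x ≤ g x) :
    IntegrableOn f S μ ∧ ∫ x in S, f x ∂μ ≤ ∫ x in S, g x ∂μ := by
  have hfi : IntegrableOn f S μ :=
    hg.mono' hf <| (ae_restrict_iff' hS).2 <| .of_forall fun x hx => by
      rw [norm_of_nonneg (hf₀ x hx)]
      exact hfg x hx
  exact ⟨hfi, setIntegral_mono_on hfi hg hS hfg⟩

theorem setIntegral_Ioi_eq_add_add {f : ℝ → ℝ} {a b c : ℝ} (hab : a ≤ b) (hbc : b ≤ c)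
    (h₁ : IntegrableOn f (Ioc a b)) (h₂ : IntegrableOn f (Ioc b c))
    (h₃ : IntegrableOn f (Ioi c)) :
    ∫ x in Ioi a, f x = (∫ x in Ioc a b, f x) + (∫ x in Ioc b c, f x) + ∫ x in Ioi c, f x := by
  have hac : Ioc a b ∪ Ioc b c = Ioc a c := Ioc_union_Ioc_eq_Ioc hab hbc
  rw [← setIntegral_union (Ioc_disjoint_Ioc_of_le le_rfl) measurableSet_Ioc h₁ h₂, hac,
    ← setIntegral_union Ioc_disjoint_Ioi_same measurableSet_Ioi (hac ▸ h₁.union h₂) h₃,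
    Ioc_union_Ioi_eq_Ioi (hab.trans hbc)]

theorem integrableOn_Ioc_zero_rpow_neg {α : ℝ} (hα : α < 1) {σ : ℝ} (hσ : 0 ≤ σ) :
    IntegrableOn (fun s : ℝ => s ^ (-α)) (Ioc 0 σ) :=
  (intervalIntegrable_iff_integrableOn_Ioc_of_le hσ).1 <|
    intervalIntegral.intervalIntegrable_rpow' (by linarith)

theorem integral_Ioc_zero_rpow_neg {α : ℝ} (hα : α < 1) {σ : ℝ} (hσ : 0 ≤ σ) :
    ∫ s in Ioc 0 σ, s ^ (-α) = σ ^ (1 - α) / (1 - α) := by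
  rw [← intervalIntegral.integral_of_le hσ, integral_rpow (.inl (by linarith)),
    zero_rpow (by linarith), neg_add_eq_sub]
  ring

theorem integral_Ioc_inv {b c : ℝ} (hb : 0 < b) (hbc : b ≤ c) :
    ∫ s in Ioc b c, s⁻¹ = log (c / b) := by
  rw [← intervalIntegral.integral_of_le hbc, integral_inv_of_pos hb (hb.trans_le hbc)]

theorem exp_neg_mul_mul_min_le {a s τ x : ℝ} (ha : 1 ≤ a) (hs : 1 ≤ s) (hτ : 0 ≤ τ)
    (hx : 0 ≤ x) : exp (-a * s) * min (s⁻¹ * τ) x ≤ τ * exp (-s) := by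
  rw [mul_comm τ]
  refine mul_le_mul (exp_le_exp.2 (by nlinarith)) ?_ (by positivity) (exp_nonneg _)
  exact (min_le_left _ _).trans (mul_le_of_le_one_left hτ (inv_le_one_of_one_le₀ hs))

theorem setIntegral_Ioi_exp_mul_min_le {α τ a σ : ℝ} (hα : α < 1) (hτ : 0 ≤ τ)
    (ha : 1 ≤ a) (hσ₀ : 0 < σ) (hσ₁ : σ ≤ 1) :
    ∫ s in Ioi (0:ℝ), exp (-a * s) * min (s⁻¹ * τ) (s ^ (-α))
      ≤ σ ^ (1 - α) / (1 - α) + τ * log σ⁻¹ + τ * exp (-1) := by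
  set F : ℝ → ℝ := fun s => exp (-a * s) * min (s⁻¹ * τ) (s ^ (-α))
  have hF : AEStronglyMeasurable F := by fun_prop
  have hmin₀ {s : ℝ} (hs : 0 < s) : 0 ≤ min (s⁻¹ * τ) (s ^ (-α)) := by positivity
  have hF₀ {S : Set ℝ} (hS : S ⊆ Ioi 0) : ∀ s ∈ S, 0 ≤ F s := fun s hs =>
    mul_nonneg (exp_nonneg _) (hmin₀ (hS hs))
  have hF_le_min {s : ℝ} (hs : 0 < s) : F s ≤ min (s⁻¹ * τ) (s ^ (-α)) :=
    mul_le_of_le_one_left (hmin₀ hs) (exp_le_one_iff.2 (by nlinarith))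
  have h₁ : ∀ s ∈ Ioc 0 σ, F s ≤ s ^ (-α) := fun s hs =>
    (hF_le_min hs.1).trans (min_le_right _ _)
  have h₂ : ∀ s ∈ Ioc σ 1, F s ≤ τ * s⁻¹ := fun s hs =>
    (hF_le_min (hσ₀.trans hs.1)).trans ((min_le_left _ _).trans_eq (mul_comm _ _))
  -- beyond `1`, the factor `e^{-as} ≤ e^{-s}` supplies the integrability
  have h₃ : ∀ s ∈ Ioi 1, F s ≤ τ * exp (-s) := fun s (hs : 1 < s) =>
    exp_neg_mul_mul_min_le ha hs.le hτ (by positivity)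
  have hg₁ : IntegrableOn (fun s : ℝ => s ^ (-α)) (Ioc 0 σ) :=
    integrableOn_Ioc_zero_rpow_neg hα hσ₀.le
  have hg₂ : IntegrableOn (fun s : ℝ => τ * s⁻¹) (Ioc σ 1) :=
    ((continuousOn_inv₀.mono fun s hs => (hσ₀.trans_le hs.1).ne').integrableOn_compact
      isCompact_Icc |>.mono_set Ioc_subset_Icc_self).const_mul τ
  have hg₃ : IntegrableOn (fun s : ℝ => τ * exp (-s)) (Ioi 1) :=
    (integrableOn_exp_neg_Ioi 1).const_mul τ
  obtain ⟨hF₁, hle₁⟩ := integrableOn_and_setIntegral_le_of_nonneg_of_le hg₁ hF.restrict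
    measurableSet_Ioc (hF₀ Ioc_subset_Ioi_self) h₁
  obtain ⟨hF₂, hle₂⟩ := integrableOn_and_setIntegral_le_of_nonneg_of_le hg₂ hF.restrict
    measurableSet_Ioc (hF₀ fun s hs => hσ₀.trans hs.1) h₂
  obtain ⟨hF₃, hle₃⟩ := integrableOn_and_setIntegral_le_of_nonneg_of_le hg₃ hF.restrict
    measurableSet_Ioi (hF₀ fun s (hs : 1 < s) => one_pos.trans hs) h₃
  calc ∫ s in Ioi 0, F s
      = (∫ s in Ioc 0 σ, F s) + (∫ s in Ioc σ 1, F s) + ∫ s in Ioi 1, F s :=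
        setIntegral_Ioi_eq_add_add hσ₀.le hσ₁ hF₁ hF₂ hF₃
    _ ≤ (∫ s in Ioc 0 σ, s ^ (-α)) + (∫ s in Ioc σ 1, τ * s⁻¹)
          + ∫ s in Ioi 1, τ * exp (-s) :=
        add_le_add (add_le_add hle₁ hle₂) hle₃
    _ = σ ^ (1 - α) / (1 - α) + τ * log σ⁻¹ + τ * exp (-1) := by
        rw [integral_Ioc_zero_rpow_neg hα hσ₀.le, integral_const_mul,
          integral_Ioc_inv hσ₀ hσ₁, integral_const_mul, integral_exp_neg_Ioi, one_div]

/-- Lemma 3.10, third estimate: for `0 ≤ α < 1`, `0 < τ ≤ e⁻²`, `a ≥ 1`,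
`∫₀^∞ e^{-as} min(s⁻¹τ, s^{-α}) ds ≤ (2/(1-α)) |log τ| τ`. -/
theorem exp_l_integral_estimate_infinite
    (α τ a : ℝ) (hα0 : 0 ≤ α) (hα1 : α < 1)
    (hτ0 : 0 < τ) (hτ1 : τ ≤ Real.exp (-2)) (ha : 1 ≤ a) :
    ∫ s in Set.Ioi (0:ℝ), Real.exp (-a * s) * min (s⁻¹ * τ) (s ^ (-α))
      ≤ 2 / (1 - α) * |Real.log τ| * τ := by
  -- `σ` is where `s^{-α}` and `τ/s` cross
  set σ := τ ^ (1 / (1 - α))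
  have h1α : 0 < 1 - α := by linarith
  have hlogτ : log τ ≤ -2 := (log_le_iff_le_exp hτ0).2 hτ1
  have hσ₀ : 0 < σ := rpow_pos_of_pos hτ0 _
  have hσ₁ : σ ≤ 1 :=
    rpow_le_one hτ0.le (hτ1.trans (exp_le_one_iff.2 (by norm_num))) (by positivity)
  have hσpow : σ ^ (1 - α) = τ := by
    rw [← rpow_mul hτ0.le, one_div_mul_cancel h1α.ne', rpow_one]
  have hlogσ : log σ⁻¹ = |log τ| / (1 - α) := by
    rw [log_inv, log_rpow hτ0, abs_of_neg (by linarith)]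
    ring
  have hτe : τ * exp (-1) ≤ τ / (1 - α) :=
    (mul_le_of_le_one_right hτ0.le (exp_le_one_iff.2 (by norm_num))).trans
      (le_div_self hτ0.le h1α (by linarith))
  calc _ ≤ σ ^ (1 - α) / (1 - α) + τ * log σ⁻¹ + τ * exp (-1) :=
        setIntegral_Ioi_exp_mul_min_le hα1 hτ0.le ha hσ₀ hσ₁
    _ ≤ (2 + |log τ|) * τ / (1 - α) := by
        rw [hσpow, hlogσ]
        have : (2 + |log τ|) * τ / (1 - α) = 2 * (τ / (1 - α)) + τ * (|log τ| / (1 - α)) := by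
          ring
        linarith
    _ ≤ 2 / (1 - α) * |log τ| * τ := by
        rw [div_mul_eq_mul_div, div_mul_eq_mul_div, div_le_div_iff_of_pos_right h1α]
        nlinarith [abs_of_neg (by linarith : log τ < 0)]
end

section
/- Let a > 0, α ∈ (0,1) and λ > 0. Then ∫_0^∞ e^{−as} (max(λ, α/s))^α ds ≤ (1−α)^{−1} λ^{α−1} + λ^α a^{−1}. -/
open MeasureTheory Set Real

/-- Lemma 5.2: for `a > 0`, `α ∈ (0,1)`, `λ > 0`,
`∫₀^∞ e^{-as} (max(λ, α/s))^α ds ≤ (1-α)⁻¹ λ^{α-1} + λ^α a⁻¹`. -/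
theorem exp_max_integral_estimate
    (a α lam : ℝ) (ha : 0 < a) (hα0 : 0 < α) (hα1 : α < 1) (hlam : 0 < lam) :
    ∫ s in Set.Ioi (0:ℝ), Real.exp (-a * s) * max lam (α / s) ^ α
      ≤ (1 - α)⁻¹ * lam ^ (α - 1) + lam ^ α * a⁻¹ := by
  set f : ℝ → ℝ := fun s => Real.exp (-a * s) * max lam (α / s) ^ α with hf
  set c : ℝ := α / lam with hc
  have hc0 : 0 < c := div_pos hα0 hlam
  have h1α : 0 < 1 - α := by linarith
  have hfm : Measurable f := by
    apply (measurable_exp.comp (measurable_const.mul measurable_id)).mul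
    exact (measurable_const.max (measurable_const.div measurable_id)).pow_const α
  -- pointwise values
  have hmax_left : ∀ s ∈ Ioc (0:ℝ) c, max lam (α / s) = α / s := by
    intro s hs
    refine max_eq_right ((le_div_iff₀ hs.1).mpr ?_)
    have := (le_div_iff₀ hlam).mp hs.2; nlinarith
  have hmax_right : ∀ s ∈ Ioi c, max lam (α / s) = lam := by
    intro s hs
    have hs0 : 0 < s := hc0.trans hs
    refine max_eq_left (le_of_lt ((div_lt_iff₀ hs0).mpr ?_))
    have := (div_lt_iff₀ hlam).mp hs; nlinarith
  have hfnonneg : ∀ s, 0 ≤ f s := fun s => by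
    apply mul_nonneg (Real.exp_pos _).le
    exact Real.rpow_nonneg (le_max_of_le_left hlam.le) α
  -- the dominating function on (0, c]
  set g : ℝ → ℝ := fun s => α ^ α * s ^ (-α) with hg
  have hg_int : IntegrableOn g (Ioc 0 c) := by
    apply Integrable.const_mul
    exact (intervalIntegrable_iff_integrableOn_Ioc_of_le hc0.le).mp
      (intervalIntegral.intervalIntegrable_rpow' (by linarith))
  have hfg : ∀ s ∈ Ioc (0:ℝ) c, f s ≤ g s := by
    intro s hs
    rw [hf, hg]
    simp only [hmax_left s hs]
    calc Real.exp (-a * s) * (α / s) ^ α ≤ 1 * (α / s) ^ α := by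
          apply mul_le_mul_of_nonneg_right _ (Real.rpow_nonneg (div_nonneg hα0.le hs.1.le) α)
          exact Real.exp_le_one_iff.mpr (by nlinarith [hs.1])
      _ = α ^ α * s ^ (-α) := by
          rw [one_mul, Real.div_rpow hα0.le hs.1.le, Real.rpow_neg hs.1.le, div_eq_mul_inv]
  have hf_int1 : IntegrableOn f (Ioc 0 c) := by
    apply MeasureTheory.Integrable.mono hg_int hfm.aestronglyMeasurable.restrict
    refine (ae_restrict_iff' measurableSet_Ioc).mpr (Filter.Eventually.of_forall fun s hs => ?_)
    rw [Real.norm_eq_abs, Real.norm_eq_abs, abs_of_nonneg (hfnonneg s)]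
    exact (hfg s hs).trans (le_abs_self _)
  have hf_int2 : IntegrableOn f (Ioi c) := by
    refine IntegrableOn.congr_fun ((exp_neg_integrableOn_Ioi c ha).mul_const (lam ^ α))
      (fun s hs => ?_) measurableSet_Ioi
    rw [hf]; simp only [hmax_right s hs]
  -- split the integral
  have hsplit : ∫ s in Ioi (0:ℝ), f s = (∫ s in Ioc 0 c, f s) + ∫ s in Ioi c, f s := by
    rw [← setIntegral_union (Ioc_disjoint_Ioi le_rfl) measurableSet_Ioi hf_int1 hf_int2,
      Ioc_union_Ioi_eq_Ioi hc0.le]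
  -- first piece
  have hpiece1 : ∫ s in Ioc (0:ℝ) c, f s ≤ (1 - α)⁻¹ * lam ^ (α - 1) := by
    have h1 : ∫ s in Ioc (0:ℝ) c, f s ≤ ∫ s in Ioc (0:ℝ) c, g s :=
      setIntegral_mono_on hf_int1 hg_int measurableSet_Ioc hfg
    have h2 : ∫ s in Ioc (0:ℝ) c, g s = α ^ α * (c ^ (1 - α) / (1 - α)) := by
      rw [hg, MeasureTheory.integral_const_mul, ← intervalIntegral.integral_of_le hc0.le,
        integral_rpow (Or.inl (by linarith))]
      rw [Real.zero_rpow (by linarith : -α + 1 ≠ 0)]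
      ring_nf
    have hαα : α ^ α * α ^ (1 - α) = α := by
      rw [← Real.rpow_add hα0]; norm_num
    have h3 : α ^ α * c ^ (1 - α) = α * lam ^ (α - 1) := by
      rw [hc, Real.div_rpow hα0.le hlam.le,
        show (α - 1 : ℝ) = -(1 - α) by ring, Real.rpow_neg hlam.le, div_eq_mul_inv]
      linear_combination (lam ^ (1 - α))⁻¹ * hαα
    calc ∫ s in Ioc (0:ℝ) c, f s ≤ α ^ α * (c ^ (1 - α) / (1 - α)) := h1.trans_eq h2
      _ = α ^ α * c ^ (1 - α) / (1 - α) := by ring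
      _ = α * lam ^ (α - 1) / (1 - α) := by rw [h3]
      _ ≤ 1 * lam ^ (α - 1) / (1 - α) := by
          gcongr
      _ = (1 - α)⁻¹ * lam ^ (α - 1) := by ring
  -- second piece
  have hpiece2 : ∫ s in Ioi c, f s ≤ lam ^ α * a⁻¹ := by
    have h1 : ∫ s in Ioi c, f s = lam ^ α * ∫ s in Ioi c, Real.exp (-a * s) := by
      rw [← MeasureTheory.integral_const_mul]
      apply setIntegral_congr_fun measurableSet_Ioi
      intro s hs; rw [hf]; simp only [hmax_right s hs]; ring
    have h2 : ∫ s in Ioi c, Real.exp (-a * s) = a⁻¹ * Real.exp (-(a * c)) := by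
      have := MeasureTheory.integral_comp_mul_left_Ioi (fun x => Real.exp (-x)) c ha
      simp only [smul_eq_mul] at this
      calc ∫ s in Ioi c, Real.exp (-a * s) = ∫ s in Ioi c, Real.exp (-(a * s)) := by
            simp [neg_mul]
        _ = a⁻¹ * ∫ x in Ioi (a * c), Real.exp (-x) := this
        _ = a⁻¹ * Real.exp (-(a * c)) := by rw [integral_exp_neg_Ioi]
    rw [h1, h2]
    have hexp : Real.exp (-(a * c)) ≤ 1 := Real.exp_le_one_iff.mpr (by nlinarith)
    calc lam ^ α * (a⁻¹ * Real.exp (-(a * c))) ≤ lam ^ α * (a⁻¹ * 1) :=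
          mul_le_mul_of_nonneg_left
            (mul_le_mul_of_nonneg_left hexp (inv_pos.mpr ha).le)
            (Real.rpow_nonneg hlam.le _)
      _ = lam ^ α * a⁻¹ := by ring
  calc ∫ s in Ioi (0:ℝ), f s = (∫ s in Ioc 0 c, f s) + ∫ s in Ioi c, f s := hsplit
    _ ≤ (1 - α)⁻¹ * lam ^ (α - 1) + lam ^ α * a⁻¹ := add_le_add hpiece1 hpiece2
end

section
/- Let X be a Banach space and, for each n ∈ ℕ, let X_n be a Banach space. Let T : X → X and T_n : X_n → X_n be compact linear operators, and let E_n : X → X_n, M_n : X_n → X be bounded linear operators with M_n ∘ E_n = id_X, ‖E_n‖ ≤ 2 and ‖M_n‖ ≤ 2 for all n. Assume ‖T_n − E_n ∘ T ∘ M_n‖_{L(X_n, X_n)} → 0 as n → ∞. If for each n the scalar μ_n is an eigenvalue of T_n (i.e. there exists u_n ≠ 0 with T_n u_n = μ_n u_n), and μ_n → μ with μ ≠ 0, then μ is an eigenvalue of T. -/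
/-!
Normalize eigenvectors `T_n w_n = μ_n w_n`, `‖w_n‖ = 1`, and transfer them to `X` as `v_n = M_n w_n`.
Since `M_n E_n = id`, the residual `T v_n - μ_n v_n = M_n (E_n T M_n - T_n) w_n` tends to zero, while
`|μ_n| ≤ ‖T_n - E_n T M_n‖ + 2 ‖T v_n‖` keeps `T v_n` away from zero. Compactness of `T` yields
`T v_{φ k} → z ≠ 0`; then `μ_{φ k} v_{φ k} → z`, and applying `T` gives `T z = μ z`.
-/

open Filter Topology

section Transfer

variable {𝕜 : Type*} [NontriviallyNormedField 𝕜]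
  {X Y : Type*} [NormedAddCommGroup X] [NormedSpace 𝕜 X] [NormedAddCommGroup Y] [NormedSpace 𝕜 Y]
  {T : X →L[𝕜] X} {S : Y →L[𝕜] Y} {E : X →L[𝕜] Y} {M : Y →L[𝕜] X} {μ : 𝕜} {w : Y}

theorem norm_residual_transfer_le (hME : M.comp E = ContinuousLinearMap.id 𝕜 X)
    (hw : S w = μ • w) :
    ‖T (M w) - μ • M w‖ ≤ ‖M‖ * (‖S - E.comp (T.comp M)‖ * ‖w‖) := by
  have hMET : M (E (T (M w))) = T (M w) := DFunLike.congr_fun hME (T (M w))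
  have hres : T (M w) - μ • M w = M ((E.comp (T.comp M) - S) w) := by
    simp only [sub_apply, ContinuousLinearMap.comp_apply, map_sub, hMET, hw,
      map_smul]
  rw [hres, norm_sub_rev S]
  exact (M.le_opNorm _).trans (by gcongr; exact ContinuousLinearMap.le_opNorm _ _)

theorem norm_mul_le_of_eigenvector_transfer (hw : S w = μ • w) :
    ‖μ‖ * ‖w‖ ≤ ‖S - E.comp (T.comp M)‖ * ‖w‖ + ‖E‖ * ‖T (M w)‖ := by
  have hsplit : μ • w = (S - E.comp (T.comp M)) w + E (T (M w)) := by
    simp [hw]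
  calc ‖μ‖ * ‖w‖ = ‖(S - E.comp (T.comp M)) w + E (T (M w))‖ := by rw [← hsplit, norm_smul]
    _ ≤ ‖S - E.comp (T.comp M)‖ * ‖w‖ + ‖E‖ * ‖T (M w)‖ :=
      (norm_add_le _ _).trans (add_le_add (ContinuousLinearMap.le_opNorm _ _) (E.le_opNorm _))

end Transfer

section Compact

variable {𝕜 : Type*} [NontriviallyNormedField 𝕜]
  {E : Type*} [NormedAddCommGroup E] [NormedSpace 𝕜 E]

theorem ContinuousLinearMap.apply_eq_smul_of_tendsto {ι : Type*} {l : Filter ι} [l.NeBot]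
    (T : E →L[𝕜] E) {v : ι → E} {μs : ι → 𝕜} {μ : 𝕜} {z : E} (hμ : Tendsto μs l (𝓝 μ))
    (hTv : Tendsto (fun k => T (v k)) l (𝓝 z))
    (hres : Tendsto (fun k => T (v k) - μs k • v k) l (𝓝 0)) :
    T z = μ • z := by
  have hμv : Tendsto (fun k => μs k • v k) l (𝓝 z) := by
    simpa only [sub_sub_cancel, sub_zero] using hTv.sub hres
  have hTμv : Tendsto (fun k => T (μs k • v k)) l (𝓝 (μ • z)) := by
    simpa only [map_smul] using hμ.smul hTv
  exact tendsto_nhds_unique ((T.continuous.tendsto z).comp hμv) hTμv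

theorem IsCompactOperator.exists_tendsto_subseq {F : Type*} [NormedAddCommGroup F]
    [NormedSpace 𝕜 F] {T : E →L[𝕜] F} (hT : IsCompactOperator T) {v : ℕ → E} {R : ℝ}
    (hv : ∀ k, ‖v k‖ ≤ R) :
    ∃ z : F, ∃ φ : ℕ → ℕ, StrictMono φ ∧ Tendsto (fun k => T (v (φ k))) atTop (𝓝 z) := by
  obtain ⟨K, hK, hTK⟩ := hT.image_closedBall_subset_compact R
  obtain ⟨z, -, φ, hφ, hz⟩ :=
    hK.tendsto_subseq fun k => hTK ⟨v k, mem_closedBall_zero_iff.mpr (hv k), rfl⟩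
  exact ⟨z, φ, hφ, hz⟩

theorem IsCompactOperator.exists_eigenvector_of_approx {T : E →L[𝕜] E} (hT : IsCompactOperator T)
    {v : ℕ → E} {μs : ℕ → 𝕜} {μ : 𝕜} {R c : ℝ} (hv : ∀ k, ‖v k‖ ≤ R)
    (hμ : Tendsto μs atTop (𝓝 μ)) (hres : Tendsto (fun k => T (v k) - μs k • v k) atTop (𝓝 0))
    (hc : 0 < c) (hTv : ∀ᶠ k in atTop, c ≤ ‖T (v k)‖) :
    ∃ u : E, u ≠ 0 ∧ T u = μ • u := by
  obtain ⟨z, φ, hφ, hz⟩ := hT.exists_tendsto_subseq hv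
  have hcz : c ≤ ‖z‖ := ge_of_tendsto hz.norm (hφ.tendsto_atTop.eventually hTv)
  exact ⟨z, norm_pos_iff.mp (hc.trans_le hcz), T.apply_eq_smul_of_tendsto
    (hμ.comp hφ.tendsto_atTop) hz (hres.comp hφ.tendsto_atTop)⟩

end Compact

theorem exists_unit_eigenvector {𝕜 : Type*} [RCLike 𝕜] {E : Type*} [NormedAddCommGroup E]
    [NormedSpace 𝕜 E] {S : E →L[𝕜] E} {μ : 𝕜} (h : ∃ u : E, u ≠ 0 ∧ S u = μ • u) :
    ∃ w : E, ‖w‖ = 1 ∧ S w = μ • w := by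
  obtain ⟨u, hu, hSu⟩ := h
  refine ⟨(‖u‖⁻¹ : 𝕜) • u, norm_smul_inv_norm hu, ?_⟩
  rw [map_smul, hSu, smul_comm]

theorem eigenvalue_upper_semicontinuity_general
    {X : Type*} [NormedAddCommGroup X] [NormedSpace ℝ X]
    {Xn : ℕ → Type*} [∀ n, NormedAddCommGroup (Xn n)] [∀ n, NormedSpace ℝ (Xn n)]
    (T : X →L[ℝ] X) (Tn : ∀ n, Xn n →L[ℝ] Xn n)
    (En : ∀ n, X →L[ℝ] Xn n) (Mn : ∀ n, Xn n →L[ℝ] X)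
    (hT : IsCompactOperator T)
    (hME : ∀ n, (Mn n).comp (En n) = ContinuousLinearMap.id ℝ X)
    (hE : ∀ n, ‖En n‖ ≤ 2) (hM : ∀ n, ‖Mn n‖ ≤ 2)
    (hconv : Tendsto (fun n => ‖Tn n - (En n).comp (T.comp (Mn n))‖) atTop (𝓝 0))
    (μn : ℕ → ℝ) (μ : ℝ)
    (heig : ∀ n, ∃ u : Xn n, u ≠ 0 ∧ Tn n u = μn n • u)
    (hμn : Tendsto μn atTop (𝓝 μ)) (hμ : μ ≠ 0) :
    ∃ u : X, u ≠ 0 ∧ T u = μ • u := by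
  choose w hw1 hw using fun n => exists_unit_eigenvector (heig n)
  set ε := fun n => ‖Tn n - (En n).comp (T.comp (Mn n))‖
  have hv : ∀ n, ‖Mn n (w n)‖ ≤ 2 := fun n => by
    simpa [hw1 n] using (Mn n).le_of_opNorm_le (hM n) (w n)
  have hres : ∀ n, ‖T (Mn n (w n)) - μn n • Mn n (w n)‖ ≤ 2 * ε n := fun n => by
    simpa [hw1 n] using (norm_residual_transfer_le (hME n) (hw n)).trans
      (mul_le_mul_of_nonneg_right (hM n) (by positivity))
  have hlow : ∀ n, |μn n| ≤ ε n + 2 * ‖T (Mn n (w n))‖ := fun n => by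
    have h := norm_mul_le_of_eigenvector_transfer (E := En n) (T := T) (M := Mn n) (hw n)
    rw [hw1 n, mul_one, mul_one, Real.norm_eq_abs] at h
    exact h.trans (by gcongr; exact hE n)
  have hgap : ∀ᶠ n in atTop, |μ| / 2 < |μn n| - ε n :=
    (by simpa using hμn.abs.sub hconv : Tendsto (fun n => |μn n| - ε n) atTop (𝓝 |μ|)).eventually
      (lt_mem_nhds (by linarith [abs_pos.mpr hμ]))
  refine hT.exists_eigenvector_of_approx hv hμn
    (squeeze_zero_norm hres (by simpa using hconv.const_mul 2))
    (c := |μ| / 4) (by positivity) ?_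
  filter_upwards [hgap] with n hn
  linarith [hlow n]

/-- Upper semicontinuity of the spectrum (Lemma 3.2 / Remark 3.3, compact
inverse form): if `T_n`, `T` are compact operators, `M_n ∘ E_n = id`,
`‖E_n‖, ‖M_n‖ ≤ 2`, and `‖T_n - E_n T M_n‖ → 0`, then any nonzero limit `μ` of
eigenvalues `μ_n` of `T_n` is an eigenvalue of `T`. -/
theorem eigenvalue_upper_semicontinuity
    {X : Type*} [NormedAddCommGroup X] [NormedSpace ℝ X] [CompleteSpace X]
    {Xn : ℕ → Type*} [∀ n, NormedAddCommGroup (Xn n)] [∀ n, NormedSpace ℝ (Xn n)]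
    [∀ n, CompleteSpace (Xn n)]
    (T : X →L[ℝ] X) (Tn : ∀ n, Xn n →L[ℝ] Xn n)
    (En : ∀ n, X →L[ℝ] Xn n) (Mn : ∀ n, Xn n →L[ℝ] X)
    (hT : IsCompactOperator T) (hTn : ∀ n, IsCompactOperator (Tn n))
    (hME : ∀ n, (Mn n).comp (En n) = ContinuousLinearMap.id ℝ X)
    (hE : ∀ n, ‖En n‖ ≤ 2) (hM : ∀ n, ‖Mn n‖ ≤ 2)
    (hconv : Tendsto (fun n => ‖Tn n - (En n).comp (T.comp (Mn n))‖) atTop (𝓝 0))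
    (μn : ℕ → ℝ) (μ : ℝ)
    (heig : ∀ n, ∃ u : Xn n, u ≠ 0 ∧ Tn n u = μn n • u)
    (hμn : Tendsto μn atTop (𝓝 μ)) (hμ : μ ≠ 0) :
    ∃ u : X, u ≠ 0 ∧ T u = μ • u :=
  eigenvalue_upper_semicontinuity_general T Tn En Mn hT hME hE hM hconv μn μ heig hμn hμ
end
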